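/- arXiv:1707.09112 — 4 statements merged into one kernel-verified Lean document; each statement's English description precedes it below -/
import Mathlib

section
/- Let 1 ≤ r ≤ (1/2)·min(p,q) and let N > (p+q)r − r². Then for Lebesgue-almost every tuple A = (A_1, …, A_N) ∈ (ℝ^{p×q})^N (equivalently, with probability one when A is drawn from any probability distribution on (ℝ^{p×q})^N that is absolutely continuous with respect to Lebesgue measure), A has the almost everywhere rank-r matrix recovery property in ℝ^{p×q}: the set {P ∈ M_{p×q,r}(ℝ) : there exists Q ∈ M_{p×q,r}(ℝ) with Q ≠ P and Tr(A_j^T Q) = Tr(A_j^T P) for all 1 ≤ j ≤ N} has ((p+q)r − r²)-dimensional Hausdorff measure zero. -/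
open MeasureTheory Matrix

noncomputable section

/- Metric / measure-theoretic structure on matrix spaces, transported from the
corresponding pi types (`Matrix m n α` is by definition `m → n → α`). -/
instance {l o α : Type*} [Fintype l] [Fintype o] [MetricSpace α] :
    MetricSpace (Matrix l o α) := inferInstanceAs (MetricSpace (l → o → α))

instance {l o α : Type*} [MeasurableSpace α] : MeasurableSpace (Matrix l o α) :=
  inferInstanceAs (MeasurableSpace (l → o → α))

instance {l o α : Type*} [Countable l] [Countable o] [MeasurableSpace α] [TopologicalSpace α]
    [SecondCountableTopology α] [BorelSpace α] : BorelSpace (Matrix l o α) :=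
  inferInstanceAs (BorelSpace (l → o → α))

instance {l o α : Type*} [Fintype l] [Fintype o] [MeasureSpace α]
    [SigmaFinite (volume : Measure α)] : MeasureSpace (Matrix l o α) :=
  inferInstanceAs (MeasureSpace (l → o → α))

/-- The (Krull) dimension of a subset `V` of `σ → k`, i.e. the Krull dimension of the
quotient of the polynomial ring by the vanishing ideal of `V`. -/
def algDim (k : Type*) [Field k] {σ : Type*} (V : Set (σ → k)) : WithBot ℕ∞ :=
  ringKrullDim (MvPolynomial σ k ⧸ MvPolynomial.vanishingIdeal k V)

/-- `V ⊆ (σ → k)` is an algebraic set: the common zero locus of finitely many polynomials. -/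
def IsAlgSet (k : Type*) [Field k] {σ : Type*} (V : Set (σ → k)) : Prop :=
  ∃ S : Finset (MvPolynomial σ k), V = {x | ∀ f ∈ S, MvPolynomial.eval x f = 0}

/-- `V ⊆ (σ → k)` is a projective variety (affine cone): the common zero locus of
finitely many homogeneous polynomials. -/
def IsProjVariety (k : Type*) [Field k] {σ : Type*} (V : Set (σ → k)) : Prop :=
  ∃ S : Finset (MvPolynomial σ k), (∀ f ∈ S, ∃ n, f.IsHomogeneous n) ∧
    V = {x | ∀ f ∈ S, MvPolynomial.eval x f = 0}

/-- Identify a `p × q` matrix with a point of `k^(p*q)`. -/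
def matToFun {k : Type*} {p q : ℕ} (M : Matrix (Fin p) (Fin q) k) : Fin p × Fin q → k :=
  fun ij => M ij.1 ij.2

/-- Dimension of a set of matrices, viewed as an algebraic set. -/
def matDim (k : Type*) [Field k] {p q : ℕ} (V : Set (Matrix (Fin p) (Fin q) k)) :
    WithBot ℕ∞ :=
  algDim k (matToFun '' V)

/-- A set of matrices is a projective variety (cut out by homogeneous polynomials in
the entries). -/
def matIsProjVariety (k : Type*) [Field k] {p q : ℕ}
    (V : Set (Matrix (Fin p) (Fin q) k)) : Prop :=
  IsProjVariety k (matToFun '' V)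

/-- A set of matrices is an algebraic set (cut out by polynomials in the entries). -/
def matIsAlgSet (k : Type*) [Field k] {p q : ℕ}
    (V : Set (Matrix (Fin p) (Fin q) k)) : Prop :=
  IsAlgSet k (matToFun '' V)

/-- Identify an `N`-tuple of `p × q` matrices with a point of `k^(N*p*q)`. -/
def tupToFun {k : Type*} {N p q : ℕ} (A : Fin N → Matrix (Fin p) (Fin q) k) :
    Fin N × Fin p × Fin q → k := fun x => A x.1 x.2.1 x.2.2

/-- Dimension of a set of tuples of matrices, viewed as an algebraic set. -/
def tupDim (k : Type*) [Field k] {N p q : ℕ}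
    (V : Set (Fin N → Matrix (Fin p) (Fin q) k)) : WithBot ℕ∞ :=
  algDim k (tupToFun '' V)

/-- A set of tuples of matrices is an algebraic set. -/
def tupIsAlgSet (k : Type*) [Field k] {N p q : ℕ}
    (V : Set (Fin N → Matrix (Fin p) (Fin q) k)) : Prop :=
  IsAlgSet k (tupToFun '' V)

/-
Matrices of rank at most `r` are covered by finitely many polynomial charts `rowChart t`, with
`d = (p + q) r - r²` parameters: pick `r` rows spanning the row space, the other rows being
combinations of them. Fix two charts. The pairs `(A, u)` for which some `v` gives a different
matrix `rowChart t' v - rowChart t u ≠ 0` orthogonal to every `Aⱼ` form a Lebesgue-null set: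
solving each orthogonality equation for a coordinate where the difference does not vanish
parametrises them by a `C¹` image of a space of dimension `N (pq - 1) + 2d < N pq + d`.
By Fubini, for almost every `A` the confusable parameters `u` form a null set in `ℝ^d`, and its
image under the locally Lipschitz chart has `d`-dimensional Hausdorff measure zero.
-/

open Set
open scoped NNReal

theorem LocallyLipschitzOn.hausdorffMeasure_image_eq_zero {X Y : Type*} [EMetricSpace X]
    [MeasurableSpace X] [BorelSpace X] [SecondCountableTopology X] [EMetricSpace Y]
    [MeasurableSpace Y] [BorelSpace Y] {f : X → Y} {s : Set X} (hf : LocallyLipschitzOn s f)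
    {d : ℝ} (hd : 0 ≤ d) (hs : μH[d] s = 0) : μH[d] (f '' s) = 0 := by
  choose! K t ht hlip using fun x (hx : x ∈ s) => hf hx
  obtain ⟨T, hTs, hTc, hsT⟩ := TopologicalSpace.countable_cover_nhdsWithin ht
  have hcover : f '' s ⊆ ⋃ x ∈ T, f '' (s ∩ t x) := by
    rintro _ ⟨y, hy, rfl⟩
    obtain ⟨x, hxT, hyx⟩ := mem_iUnion₂.1 (hsT hy)
    exact mem_iUnion₂.2 ⟨x, hxT, y, ⟨hy, hyx⟩, rfl⟩
  refine measure_mono_null hcover ((measure_biUnion_null_iff hTc).2 fun x hx => ?_)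
  refine nonpos_iff_eq_zero.1 ?_
  calc μH[d] (f '' (s ∩ t x)) ≤ K x ^ d * μH[d] (s ∩ t x) :=
        ((hlip x (hTs hx)).mono inter_subset_right).hausdorffMeasure_image_le hd
    _ = 0 := by rw [measure_mono_null inter_subset_left hs, mul_zero]

theorem volume_image_eq_zero_of_finrank_lt {E ι : Type*} [NormedAddCommGroup E]
    [NormedSpace ℝ E] [FiniteDimensional ℝ E] [MeasurableSpace E] [BorelSpace E] [Fintype ι]
    {f : E → ι → ℝ} {s : Set E} (hf : ∀ x ∈ s, ContDiffAt ℝ 1 f x)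
    (hdim : Module.finrank ℝ E < Fintype.card ι) : volume (f '' s) = 0 := by
  have hlip : LocallyLipschitzOn s f := fun x hx => by
    obtain ⟨K, t, ht, hK⟩ := (hf x hx).exists_lipschitzOnWith
    exact ⟨K, t, mem_nhdsWithin_of_mem_nhds ht, hK⟩
  have hs : μH[Fintype.card ι] s = 0 := by
    refine measure_mono_null (subset_univ s) ?_
    exact_mod_cast hausdorffMeasure_of_dimH_lt (d := (Fintype.card ι : ℝ≥0))
      (by rw [Real.dimH_univ_eq_finrank]; exact_mod_cast hdim)
  rw [← hausdorffMeasure_pi_real]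
  exact hlip.hausdorffMeasure_image_eq_zero (by positivity) hs

theorem MeasureTheory.measurePreserving_curry {ι κ X : Type*} [Fintype ι] [Fintype κ]
    [MeasurableSpace X] (μ : Measure X) [SigmaFinite μ] :
    MeasurePreserving (MeasurableEquiv.curry ι κ X) (Measure.pi fun _ => μ)
      (Measure.pi fun _ => Measure.pi fun _ => μ) := by
  refine MeasurePreserving.symm _ ⟨(MeasurableEquiv.curry ι κ X).symm.measurable,
    (Measure.pi_eq fun s _ => ?_).symm⟩
  have hpre : (MeasurableEquiv.curry ι κ X).symm ⁻¹' univ.pi s =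
      univ.pi fun i => univ.pi fun k => s (i, k) := by
    ext f
    simp [MeasurableEquiv.coe_curry_symm, Prod.forall]
  simp_rw [MeasurableEquiv.map_apply, hpre, Measure.pi_pi]
  exact (Fintype.prod_prod_type fun ik : ι × κ => μ (s ik)).symm

theorem Matrix.volume_preserving_vec {m n : Type*} [Fintype m] [Fintype n] :
    MeasurePreserving (Matrix.vec : Matrix m n ℝ → n × m → ℝ) volume volume :=
  (volume_preserving_arrowCongr' (Equiv.prodComm m n) (MeasurableEquiv.refl ℝ)
    (MeasurePreserving.id volume)).comp (measurePreserving_curry volume).symm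

section OrthCompletion

variable {ι : Type*} [Fintype ι] [DecidableEq ι]

def orthCompletion (D : ι → ℝ) (i : ι) (c : {x // x ≠ i} → ℝ) : ι → ℝ :=
  fun x => if h : x = i then -(∑ y, c y * D y) / D i else c ⟨x, h⟩

theorem orthCompletion_restrict {D b : ι → ℝ} {i : ι} (hDi : D i ≠ 0) (hb : b ⬝ᵥ D = 0) :
    orthCompletion D i (fun y => b y) = b := by
  funext x
  by_cases h : x = i
  · subst h
    rw [dotProduct, Fintype.sum_eq_add_sum_subtype_ne _ x] at hb
    rw [orthCompletion, dif_pos rfl, div_eq_iff hDi]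
    linarith
  · simp [orthCompletion, h]

theorem contDiffAt_orthCompletion {n : WithTop ℕ∞} {i : ι} {z : (ι → ℝ) × ({x // x ≠ i} → ℝ)}
    (hz : z.1 i ≠ 0) :
    ContDiffAt ℝ n (fun z : (ι → ℝ) × ({x // x ≠ i} → ℝ) => orthCompletion z.1 i z.2) z := by
  rw [contDiffAt_pi]
  intro x
  by_cases h : x = i
  · subst h
    simp only [orthCompletion, dif_pos]
    exact ContDiffAt.div (by fun_prop) (by fun_prop) hz
  · simp only [orthCompletion, dif_neg h]
    fun_prop

end OrthCompletion

section OrthogonalToFamily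

variable {ν ι κ κ' : Type*} [Fintype ν] [Fintype ι] [Fintype κ] [Fintype κ']

def orthParam [DecidableEq ι] (g : (κ → ℝ) → ι → ℝ) (π : (κ → ℝ) → κ' → ℝ) (i : ι)
    (z : (ν → {x // x ≠ i} → ℝ) × (κ → ℝ)) : (ν × ι) ⊕ κ' → ℝ :=
  Sum.elim (fun jx => orthCompletion (g z.2) i (z.1 jx.1) jx.2) (π z.2)

theorem contDiffAt_orthParam [DecidableEq ι] {g : (κ → ℝ) → ι → ℝ} {π : (κ → ℝ) → κ' → ℝ}
    (hg : ContDiff ℝ 1 g) (hπ : ContDiff ℝ 1 π) {i : ι}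
    {z : (ν → {x // x ≠ i} → ℝ) × (κ → ℝ)} (hz : g z.2 i ≠ 0) :
    ContDiffAt ℝ 1 (orthParam g π i) z := by
  rw [contDiffAt_pi]
  rintro (⟨j, x⟩ | k)
  · have hj : ContDiffAt ℝ 1 (fun z : (ν → {x // x ≠ i} → ℝ) × (κ → ℝ) => (g z.2, z.1 j)) z :=
      ((hg.comp contDiff_snd).prodMk ((contDiff_apply ℝ _ j).comp contDiff_fst)).contDiffAt
    exact contDiffAt_pi.1 ((contDiffAt_orthCompletion hz).comp z hj) x
  · exact ((contDiff_pi.1 hπ k).comp contDiff_snd).contDiffAt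

theorem volume_setOf_orthogonal_eq_zero {g : (κ → ℝ) → ι → ℝ} {π : (κ → ℝ) → κ' → ℝ}
    (hg : ContDiff ℝ 1 g) (hπ : ContDiff ℝ 1 π)
    (hcard : Fintype.card κ < Fintype.card ν + Fintype.card κ') :
    volume {z : (ν → ι → ℝ) × (κ' → ℝ) |
      z.2 ∈ π '' {w | g w ≠ 0 ∧ ∀ j, z.1 j ⬝ᵥ g w = 0}} = 0 := by
  classical
  -- on a single pi type `volume` is a Hausdorff measure, see `hausdorffMeasure_pi_real`
  let Φ : ((ν × ι) ⊕ κ' → ℝ) ≃ᵐ (ν → ι → ℝ) × (κ' → ℝ) :=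
    (MeasurableEquiv.sumPiEquivProdPi fun _ => ℝ).trans
      ((MeasurableEquiv.curry ν ι ℝ).prodCongr (MeasurableEquiv.refl _))
  have hΦ : MeasurePreserving Φ volume volume :=
    ((measurePreserving_curry volume).prod (MeasurePreserving.id volume)).comp
      (volume_measurePreserving_sumPiEquivProdPi _)
  have hcover : Φ ⁻¹' {z | z.2 ∈ π '' {w | g w ≠ 0 ∧ ∀ j, z.1 j ⬝ᵥ g w = 0}} ⊆
      ⋃ i, orthParam g π i '' {z | g z.2 i ≠ 0} := by
    rintro y ⟨w, ⟨hgw, horth⟩, hπw⟩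
    obtain ⟨i, hi⟩ : ∃ i, g w i ≠ 0 := Function.ne_iff.1 hgw
    refine mem_iUnion.2 ⟨i, (fun j x => y (.inl (j, x)), w), hi, ?_⟩
    funext jx
    rcases jx with ⟨j, x⟩ | k
    · exact congrFun (orthCompletion_restrict hi (horth j)) x
    · exact congrFun hπw k
  rw [← hΦ.measure_preimage_equiv]
  refine measure_mono_null hcover (measure_iUnion_null fun i =>
    volume_image_eq_zero_of_finrank_lt (fun z hz => contDiffAt_orthParam hg hπ hz) ?_)
  obtain ⟨n, hn⟩ : ∃ n, Fintype.card ι = n + 1 :=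
    Nat.exists_eq_add_one.2 (Fintype.card_pos_iff.2 ⟨i⟩)
  simp only [Module.finrank_prod, Module.finrank_pi_fintype, Module.finrank_self,
    Finset.sum_const, Finset.card_univ, smul_eq_mul, Fintype.card_sum, Fintype.card_prod,
    Fintype.card_subtype_compl, Fintype.card_unique, hn, Nat.add_sub_cancel, mul_one]
  nlinarith

theorem ae_volume_image_orthogonal_eq_zero {g : (κ → ℝ) → ι → ℝ} {π : (κ → ℝ) → κ' → ℝ}
    (hg : ContDiff ℝ 1 g) (hπ : ContDiff ℝ 1 π)
    (hcard : Fintype.card κ < Fintype.card ν + Fintype.card κ') :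
    ∀ᵐ a : ν → ι → ℝ, volume (π '' {w | g w ≠ 0 ∧ ∀ j, a j ⬝ᵥ g w = 0}) = 0 := by
  have hnull := volume_setOf_orthogonal_eq_zero hg hπ hcard
  rw [Measure.volume_eq_prod] at hnull
  exact Measure.measure_ae_null_of_prod_null hnull

end OrthogonalToFamily

theorem exists_finset_card_eq_forall_mem_span {K V ι : Type*} [Field K] [AddCommGroup V]
    [Module K V] [Fintype ι] (v : ι → V) {r : ℕ}
    (hv : Module.finrank K (Submodule.span K (range v)) ≤ r) (hr : r ≤ Fintype.card ι) :
    ∃ t : Finset ι, t.card = r ∧ ∀ i, v i ∈ Submodule.span K (v '' t) := by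
  classical
  obtain ⟨κ, a, ha, hspan, hli⟩ := exists_linearIndependent' K v
  have : Fintype κ := Fintype.ofInjective a ha
  have hcard : (Finset.univ.image a).card ≤ r := by
    rwa [Finset.card_image_of_injective _ ha, Finset.card_univ, ← finrank_span_eq_card hli, hspan]
  obtain ⟨t, hat, -, htr⟩ :=
    Finset.exists_subsuperset_card_eq (Finset.subset_univ _) hcard (by simpa using hr)
  have hsub : range (v ∘ a) ⊆ v '' t := by
    rintro _ ⟨k, rfl⟩
    exact ⟨a k, hat (by simp), rfl⟩
  exact ⟨t, htr, fun i => Submodule.span_mono hsub (hspan ▸ Submodule.subset_span ⟨i, rfl⟩)⟩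

section RowChart

variable {m n : Type*} [DecidableEq m]

abbrev RowChartParam (n : Type*) (t : Finset m) : Type _ := (t × n) ⊕ ({i // i ∉ t} × t)

def rowChart {R : Type*} [Semiring R] (t : Finset m) (u : RowChartParam n t → R) :
    Matrix m n R :=
  Matrix.of fun i j => if hi : i ∈ t then u (.inl (⟨i, hi⟩, j))
    else ∑ k : t, u (.inr (⟨i, hi⟩, k)) * u (.inl (k, j))

theorem exists_rowChart_eq {R : Type*} [Semiring R] (P : Matrix m n R) (t : Finset m)
    (ht : ∀ i, P i ∈ Submodule.span R (P '' t)) : ∃ u, rowChart t u = P := by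
  have hc : ∀ i : {i // i ∉ t}, ∃ c : t → R, ∑ k, c k • P k = P i := fun i => by
    rw [← Submodule.mem_span_range_iff_exists_fun]
    exact image_eq_range P t ▸ ht i
  choose c hc using hc
  refine ⟨Sum.elim (fun kj => P kj.1 kj.2) (fun ik => c ik.1 ik.2), ?_⟩
  ext i j
  by_cases hi : i ∈ t
  · simp [rowChart, hi]
  · simp [rowChart, hi, ← hc ⟨i, hi⟩, Finset.sum_apply]

variable [Fintype m] [Fintype n]

theorem Matrix.exists_rowChart_eq_of_rank_le {K : Type*} [Field K] (P : Matrix m n K) {r : ℕ}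
    (hP : P.rank ≤ r) (hr : r ≤ Fintype.card m) :
    ∃ t : Finset m, t.card = r ∧ ∃ u, rowChart t u = P := by
  rw [Matrix.rank_eq_finrank_span_row] at hP
  obtain ⟨t, htr, ht⟩ := exists_finset_card_eq_forall_mem_span P.row hP hr
  exact ⟨t, htr, exists_rowChart_eq P t ht⟩

theorem card_rowChartParam (t : Finset m) :
    Fintype.card (RowChartParam n t) = (Fintype.card m + Fintype.card n) * t.card - t.card ^ 2 := by
  obtain ⟨s, hs⟩ := Nat.exists_eq_add_of_le t.card_le_univ
  simp only [Fintype.card_sum, Fintype.card_prod, Fintype.card_coe, Fintype.card_subtype_compl,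
    hs, Nat.add_sub_cancel_left]
  exact (Nat.sub_eq_of_eq_add (by ring)).symm

theorem contDiff_rowChart_apply {k : WithTop ℕ∞} (t : Finset m) (i : m) (j : n) :
    ContDiff ℝ k fun u : RowChartParam n t → ℝ => rowChart t u i j := by
  by_cases hi : i ∈ t
  · simp only [rowChart, Matrix.of_apply, dif_pos hi]
    fun_prop
  · simp only [rowChart, Matrix.of_apply, dif_neg hi]
    fun_prop

theorem locallyLipschitz_rowChart (t : Finset m) :
    LocallyLipschitz (rowChart (R := ℝ) (n := n) t) := by
  have h : ContDiff ℝ 1 fun u : RowChartParam n t → ℝ => Matrix.of.symm (rowChart t u) :=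
    contDiff_pi.2 fun i => contDiff_pi.2 fun j => contDiff_rowChart_apply t i j
  exact h.locallyLipschitz

end RowChart

section Recovery

variable {m n ν : Type*} [Fintype m] [Fintype n] [DecidableEq m]

def confusableParams (A : ν → Matrix m n ℝ) (t t' : Finset m) : Set (RowChartParam n t → ℝ) :=
  {u | ∃ v, rowChart t' v ≠ rowChart t u ∧
    ∀ j, ((A j)ᵀ * rowChart t' v).trace = ((A j)ᵀ * rowChart t u).trace}

theorem ae_volume_confusableParams_eq_zero [Fintype ν] (t t' : Finset m)
    (h : Fintype.card (RowChartParam n t') < Fintype.card ν) :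
    ∀ᵐ A : ν → Matrix m n ℝ, volume (confusableParams A t t') = 0 := by
  let g (w : RowChartParam n t ⊕ RowChartParam n t' → ℝ) : n × m → ℝ :=
    (rowChart t' (w ∘ .inr) - rowChart t (w ∘ .inl)).vec
  have hg : ContDiff ℝ 1 g := contDiff_pi.2 fun x =>
    ((contDiff_rowChart_apply t' x.2 x.1).comp (by fun_prop)).sub
      ((contDiff_rowChart_apply t x.2 x.1).comp (by fun_prop))
  have hae := ae_volume_image_orthogonal_eq_zero (ν := ν) hg
    (π := fun w => w ∘ .inl) (by fun_prop) (by rw [Fintype.card_sum]; omega)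
  have hvec : MeasurePreserving (fun (A : ν → Matrix m n ℝ) j => (A j).vec) volume volume :=
    volume_preserving_pi fun _ => Matrix.volume_preserving_vec
  filter_upwards [hvec.quasiMeasurePreserving.ae hae] with A hA
  refine measure_mono_null ?_ hA
  rintro u ⟨v, hne, htr⟩
  refine ⟨Sum.elim u v, ⟨?_, fun j => ?_⟩, Sum.elim_comp_inl u v⟩
  · simpa [g, sub_eq_zero, Matrix.vec_inj] using hne
  · simp [g, dotProduct_sub, Matrix.vec_dotProduct_vec, htr j]

theorem setOf_not_injective_subset_iUnion_rowChart (A : ν → Matrix m n ℝ) {r : ℕ}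
    (hr : r ≤ Fintype.card m) :
    {P : Matrix m n ℝ | P.rank ≤ r ∧ ∃ Q : Matrix m n ℝ, Q.rank ≤ r ∧ Q ≠ P ∧
        ∀ j, ((A j)ᵀ * Q).trace = ((A j)ᵀ * P).trace} ⊆
      ⋃ (t : Finset m) (_ : t.card = r) (t' : Finset m) (_ : t'.card = r),
        rowChart t '' confusableParams A t t' := by
  rintro P ⟨hP, Q, hQ, hQP, htr⟩
  obtain ⟨t, ht, u, rfl⟩ := P.exists_rowChart_eq_of_rank_le hP hr
  obtain ⟨t', ht', v, rfl⟩ := Q.exists_rowChart_eq_of_rank_le hQ hr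
  simp only [mem_iUnion]
  exact ⟨t, ht, t', ht', u, ⟨v, hQP, htr⟩, rfl⟩

end Recovery

theorem stmt1_general (p q r N : ℕ) (hr2 : 2 * r ≤ min p q)
    (hN : (p + q) * r - r ^ 2 < N) :
    ∀ᵐ A ∂(volume : Measure (Fin N → Matrix (Fin p) (Fin q) ℝ)),
      μH[(((p + q) * r - r ^ 2 : ℕ) : ℝ)]
        {P : Matrix (Fin p) (Fin q) ℝ | P.rank ≤ r ∧
          ∃ Q : Matrix (Fin p) (Fin q) ℝ, Q.rank ≤ r ∧ Q ≠ P ∧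
            ∀ j : Fin N, ((A j)ᵀ * Q).trace = ((A j)ᵀ * P).trace} = 0 := by
  have hrp : r ≤ Fintype.card (Fin p) := by rw [Fintype.card_fin]; omega
  have hdim : ∀ t : Finset (Fin p), t.card = r →
      Fintype.card (RowChartParam (Fin q) t) = (p + q) * r - r ^ 2 := fun t ht => by
    rw [card_rowChartParam, ht, Fintype.card_fin, Fintype.card_fin]
  have hae : ∀ᵐ A : Fin N → Matrix (Fin p) (Fin q) ℝ, ∀ t t' : Finset (Fin p),
      t.card = r → t'.card = r → volume (confusableParams A t t') = 0 := by
    simp only [ae_all_iff, Filter.eventually_imp_distrib_left]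
    intro t t' _ ht'
    exact ae_volume_confusableParams_eq_zero t t' (by rwa [hdim t' ht', Fintype.card_fin])
  filter_upwards [hae] with A hA
  refine measure_mono_null (setOf_not_injective_subset_iUnion_rowChart A hrp)
    (measure_iUnion_null fun t => measure_iUnion_null fun ht =>
      measure_iUnion_null fun t' => measure_iUnion_null fun ht' => ?_)
  rw [← hdim t ht]
  refine (locallyLipschitz_rowChart t).locallyLipschitzOn.hausdorffMeasure_image_eq_zero
    (by positivity) ?_
  rw [hausdorffMeasure_pi_real]
  exact hA t t' ht ht'

/-- If `1 ≤ r ≤ min(p,q)/2` and `N > (p+q)r - r²`, then for Lebesgue-almost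
every tuple `A ∈ (ℝ^{p×q})^N`, `A` has the almost everywhere rank-`r` matrix recovery property
in `ℝ^{p×q}`: the set of rank-`≤ r` matrices `P` that are not uniquely determined among
rank-`≤ r` matrices by the measurements `Tr(Aⱼᵀ P)` has
`((p+q)r - r²)`-dimensional Hausdorff measure zero. -/
theorem stmt1 (p q r N : ℕ) (hr1 : 1 ≤ r) (hr2 : 2 * r ≤ min p q)
    (hN : (p + q) * r - r ^ 2 < N) :
    ∀ᵐ A ∂(volume : Measure (Fin N → Matrix (Fin p) (Fin q) ℝ)),
      μH[(((p + q) * r - r ^ 2 : ℕ) : ℝ)]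
        {P : Matrix (Fin p) (Fin q) ℝ | P.rank ≤ r ∧
          ∃ Q : Matrix (Fin p) (Fin q) ℝ, Q.rank ≤ r ∧ Q ≠ P ∧
            ∀ j : Fin N, ((A j)ᵀ * Q).trace = ((A j)ᵀ * P).trace} = 0 :=
  stmt1_general p q r N hr2 hN
end
end

section
/- Let U ⊆ ℝ^m be a nonempty open set, let n < m, and let Φ : U → ℝ^n be a continuously differentiable (C¹) map. Then Φ cannot be almost everywhere injective: the set {x ∈ U : there exists y ∈ U with y ≠ x and Φ(y) = Φ(x)} is not a Lebesgue null set in ℝ^m. -/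
/-!
Pick `x₀ ∈ U` at which the rank `k` of `DΦ` is maximal; as `n < m`, `DΦ x₀` has a
nontrivial kernel `K`. With `R` the range of `DΦ x₀`, a projection `π : ℝⁿ → R` and a projection
`κ : ℝᵐ → K`, the map `x ↦ (π (Φ x), κ x)` is a local `C¹` diffeomorphism at `x₀`
(inverse function theorem). In these coordinates `π ∘ Φ` is the projection `(u, v) ↦ u`, so the
derivative of `Φ` already has rank `dim R = k` on the `R`-directions; maximality of the rank
forces it to vanish on the `K`-directions. Hence `Φ` is constant on each slice `{u} × ball`,
every point near `x₀` shares its value with another one, and the non-injectivity set is a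
neighbourhood of `x₀`, so it has positive measure.
-/

open MeasureTheory Set Filter Topology Module Metric

theorem Set.Nonempty.exists_isMaxOn_of_bddAbove {α X : Type*} [LinearOrder X] [SuccOrder X]
    [IsSuccArchimedean X] {s : Set α} (hs : s.Nonempty) {f : α → X} (hf : BddAbove (f '' s)) :
    ∃ x ∈ s, IsMaxOn f s x := by
  obtain ⟨_, ⟨x, hx, rfl⟩, hmax⟩ := hf.exists_isGreatest_of_nonempty (hs.image f)
  exact ⟨x, hx, fun y hy ↦ hmax (mem_image_of_mem f hy)⟩

section LinearAlgebra

variable {k E F G H : Type*} [Field k] [AddCommGroup E] [Module k E] [AddCommGroup F]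
  [Module k F] [AddCommGroup G] [Module k G] [AddCommGroup H] [Module k H]

theorem LinearMap.comp_inr_eq_zero_of_finrank_range_le [FiniteDimensional k F]
    [FiniteDimensional k H] {N : F × G →ₗ[k] H} {p : H →ₗ[k] F}
    (hp : p ∘ₗ N = LinearMap.fst k F G) (hrank : finrank k (range N) ≤ finrank k F) :
    N ∘ₗ LinearMap.inr k F G = 0 := by
  -- `p` maps `range N` onto `F`, so the rank bound makes it injective there.
  let q : range N →ₗ[k] F := p ∘ₗ (range N).subtype
  have hq : Function.Surjective q := fun x ↦
    ⟨⟨N (x, 0), mem_range_self _ _⟩, congr($hp (x, 0))⟩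
  have hinj : Function.Injective q :=
    (OrzechProperty.bijective_of_surjective_of_finrank_le q hq hrank).1
  ext ξ
  have h : q ⟨N (0, ξ), mem_range_self _ _⟩ = q 0 := by
    simpa [q] using congr($hp (0, ξ))
  simpa using congr(Subtype.val $(hinj h))

theorem LinearMap.bijective_prod_of_leftInverse [FiniteDimensional k E] (T : E →ₗ[k] F)
    {p : F →ₗ[k] range T} (hp : ∀ y : range T, p y = y)
    {q : E →ₗ[k] ker T} (hq : ∀ z : ker T, q z = z) :
    Function.Bijective ((p ∘ₗ T).prod q) := by
  have hinj : Function.Injective ((p ∘ₗ T).prod q) := by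
    refine (injective_iff_map_eq_zero _).2 fun z hz ↦ ?_
    have hTz : T z = 0 := by
      simpa [hp ⟨T z, mem_range_self _ _⟩] using congr(Prod.fst $hz)
    simpa [hq ⟨z, hTz⟩] using congr(Subtype.val (Prod.snd $hz))
  have hdim : finrank k E = finrank k (range T × ker T) := by
    rw [finrank_prod, finrank_range_add_finrank_ker]
  exact ⟨hinj, (injective_iff_surjective_of_finrank_eq_finrank hdim).1 hinj⟩

end LinearAlgebra

theorem Convex.apply_prodMk_eq_of_fderiv_comp_inr_eq_zero {R K F : Type*}
    [NormedAddCommGroup R] [NormedSpace ℝ R] [NormedAddCommGroup K] [NormedSpace ℝ K]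
    [NormedAddCommGroup F] [NormedSpace ℝ F] {f : R × K → F} {u : R} {t : Set K}
    (ht : Convex ℝ t) (hf : ∀ ξ ∈ t, DifferentiableAt ℝ f (u, ξ))
    (hf' : ∀ ξ ∈ t, fderiv ℝ f (u, ξ) ∘L ContinuousLinearMap.inr ℝ R K = 0)
    {v v' : K} (hv : v ∈ t) (hv' : v' ∈ t) : f (u, v) = f (u, v') := by
  have hderiv : ∀ ξ ∈ t, HasFDerivWithinAt (fun ξ ↦ f (u, ξ)) (0 : K →L[ℝ] F) t ξ := by
    intro ξ hξ
    have h := (hf ξ hξ).hasFDerivAt.comp ξ (hasFDerivAt_prodMk_right u ξ)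
    rw [hf' ξ hξ] at h
    exact h.hasFDerivWithinAt
  have h := ht.norm_image_sub_le_of_norm_hasFDerivWithin_le hderiv (C := 0) (by simp) hv' hv
  simpa [sub_eq_zero] using h

theorem OpenPartialHomeomorph.setOf_exists_ne_apply_eq_mem_nhds {X Y R K : Type*}
    [TopologicalSpace X] [TopologicalSpace R] [NormedAddCommGroup K] [NormedSpace ℝ K]
    [Nontrivial K] {Φ : X → Y} {U : Set X} (P : OpenPartialHomeomorph X (R × K)) {x₀ : X}
    (hx₀ : x₀ ∈ P.source) {B₁ : Set R} {B₂ : Set K} (hB₂ : IsOpen B₂)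
    (hB : B₁ ×ˢ B₂ ∈ 𝓝 (P x₀)) (hBP : B₁ ×ˢ B₂ ⊆ P.target)
    (hBU : MapsTo P.symm (B₁ ×ˢ B₂) U)
    (hconst : ∀ u ∈ B₁, ∀ v ∈ B₂, ∀ v' ∈ B₂, Φ (P.symm (u, v)) = Φ (P.symm (u, v'))) :
    {x ∈ U | ∃ y ∈ U, y ≠ x ∧ Φ y = Φ x} ∈ 𝓝 x₀ := by
  filter_upwards [P.eventually_left_inverse hx₀, P.continuousAt hx₀ hB] with x hx hxB
  obtain ⟨hu, hv⟩ : (P x).1 ∈ B₁ ∧ (P x).2 ∈ B₂ := hxB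
  have := Module.punctured_nhds_neBot ℝ K (P x).2
  obtain ⟨v', hv', hv'ne⟩ :=
    ((eventually_nhdsWithin_of_eventually_nhds (hB₂.mem_nhds hv)).and
      (self_mem_nhdsWithin (s := {(P x).2}ᶜ))).exists
  refine ⟨hx ▸ hBU ⟨hu, hv⟩, P.symm ((P x).1, v'), hBU ⟨hu, hv'⟩, fun h ↦ hv'ne ?_, ?_⟩
  · have h' := congr(P $h)
    rw [P.right_inv (hBP (mk_mem_prod hu hv'))] at h'
    exact congr(Prod.snd $h')
  · rw [hconst _ hu _ hv' _ hv, hx]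

theorem finrank_range_fderiv_comp_le {𝕜 E F G : Type*} [NontriviallyNormedField 𝕜]
    [NormedAddCommGroup E] [NormedSpace 𝕜 E] [NormedAddCommGroup F] [NormedSpace 𝕜 F]
    [NormedAddCommGroup G] [NormedSpace 𝕜 G] [FiniteDimensional 𝕜 G] {g : F → G} {h : E → F}
    {x : E} (hg : DifferentiableAt 𝕜 g (h x)) (hh : DifferentiableAt 𝕜 h x) :
    finrank 𝕜 (fderiv 𝕜 (g ∘ h) x).range ≤ finrank 𝕜 (fderiv 𝕜 g (h x)).range := by
  rw [fderiv_comp x hg hh]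
  exact Submodule.finrank_mono (LinearMap.range_comp_le_range _ _)

theorem fderiv_comp_inr_eq_zero_of_eventually_fst_eq {R K F : Type*}
    [NormedAddCommGroup R] [NormedSpace ℝ R] [FiniteDimensional ℝ R] [NormedAddCommGroup K]
    [NormedSpace ℝ K] [NormedAddCommGroup F] [NormedSpace ℝ F] [FiniteDimensional ℝ F]
    {f : R × K → F} {π : F →L[ℝ] R} {w : R × K} (hf : DifferentiableAt ℝ f w)
    (hfst : ∀ᶠ w' in 𝓝 w, π (f w') = w'.1)
    (hrank : finrank ℝ (fderiv ℝ f w).range ≤ finrank ℝ R) :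
    fderiv ℝ f w ∘L ContinuousLinearMap.inr ℝ R K = 0 := by
  have hπf : π ∘L fderiv ℝ f w = ContinuousLinearMap.fst ℝ R K :=
    ((π.hasFDerivAt.comp w hf.hasFDerivAt).congr_of_eventuallyEq
      (hfst.mono fun _ h ↦ h.symm)).unique hasFDerivAt_fst
  have h := LinearMap.comp_inr_eq_zero_of_finrank_range_le
    congr(ContinuousLinearMap.toLinearMap $hπf) hrank
  exact ContinuousLinearMap.ext fun ξ ↦ LinearMap.congr_fun h ξ

theorem ContDiffAt.exists_openPartialHomeomorph_fst_eq {E F : Type*} [NormedAddCommGroup E]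
    [NormedSpace ℝ E] [FiniteDimensional ℝ E] [NormedAddCommGroup F] [NormedSpace ℝ F]
    [FiniteDimensional ℝ F] {Φ : E → F} {x₀ : E} (hΦ : ContDiffAt ℝ 1 Φ x₀) :
    ∃ (π : F →L[ℝ] (fderiv ℝ Φ x₀).range)
      (P : OpenPartialHomeomorph E ((fderiv ℝ Φ x₀).range × (fderiv ℝ Φ x₀).ker)),
      x₀ ∈ P.source ∧ ContDiffAt ℝ 1 P.symm (P x₀) ∧ ∀ x, (P x).1 = π (Φ x) := by
  set T := fderiv ℝ Φ x₀
  obtain ⟨π, hπ⟩ := Submodule.ClosedComplemented.of_finiteDimensional T.range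
  obtain ⟨κ, hκ⟩ := Submodule.ClosedComplemented.of_finiteDimensional T.ker
  set G : E → T.range × T.ker := fun x ↦ (π (Φ x), κ x)
  have hGc : ContDiffAt ℝ 1 G x₀ :=
    (π.contDiff.contDiffAt.comp x₀ hΦ).prodMk κ.contDiff.contDiffAt
  have hbij := LinearMap.bijective_prod_of_leftInverse (T : E →ₗ[ℝ] F) hπ hκ
  let A : E ≃L[ℝ] T.range × T.ker := ContinuousLinearEquiv.ofBijective ((π ∘L T).prod κ)
    (LinearMap.ker_eq_bot.2 hbij.1) (LinearMap.range_eq_top.2 hbij.2)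
  have hG : HasFDerivAt G (A : E →L[ℝ] T.range × T.ker) x₀ := by
    rw [ContinuousLinearEquiv.coe_ofBijective]
    exact (π.hasFDerivAt.comp x₀ (hΦ.differentiableAt one_ne_zero).hasFDerivAt).prodMk
      κ.hasFDerivAt
  exact ⟨π, hGc.toOpenPartialHomeomorph G hG one_ne_zero,
    hGc.mem_toOpenPartialHomeomorph_source hG one_ne_zero,
    hGc.to_localInverse hG one_ne_zero, fun _ ↦ rfl⟩

theorem setOf_exists_ne_apply_eq_mem_nhds_of_isMaxOn_finrank {E F : Type*}
    [NormedAddCommGroup E] [NormedSpace ℝ E] [FiniteDimensional ℝ E] [NormedAddCommGroup F]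
    [NormedSpace ℝ F] [FiniteDimensional ℝ F] {Φ : E → F} {U : Set E}
    (hU : IsOpen U) (hΦ : ContDiffOn ℝ 1 Φ U) {x₀ : E} (hx₀ : x₀ ∈ U)
    (hmax : IsMaxOn (fun x ↦ finrank ℝ (fderiv ℝ Φ x).range) U x₀)
    (hker : (fderiv ℝ Φ x₀).ker ≠ ⊥) :
    {x ∈ U | ∃ y ∈ U, y ≠ x ∧ Φ y = Φ x} ∈ 𝓝 x₀ := by
  obtain ⟨π, P, hx₀P, hψ, hPfst⟩ :=
    (hΦ.contDiffAt (hU.mem_nhds hx₀)).exists_openPartialHomeomorph_fst_eq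
  have hΦd : ∀ x ∈ U, DifferentiableAt ℝ Φ x := fun x hx ↦
    (hΦ.differentiableOn one_ne_zero).differentiableAt (hU.mem_nhds hx)
  obtain ⟨ε, hε, hball⟩ : ∃ ε > 0, ∀ w ∈ ball (P x₀) ε,
      w ∈ P.target ∧ P.symm w ∈ U ∧ DifferentiableAt ℝ P.symm w := by
    refine eventually_nhds_iff_ball.1 <|
      (P.open_target.eventually_mem (P.map_source hx₀P)).and <| Eventually.and ?_ <|
        (hψ.eventually (by simp)).mono fun _ h ↦ h.differentiableAt one_ne_zero
    refine (P.continuousAt_symm (P.map_source hx₀P)).preimage_mem_nhds ?_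
    rw [P.left_inv hx₀P]
    exact hU.mem_nhds hx₀
  have hkill : ∀ w ∈ ball (P x₀) ε,
      fderiv ℝ (Φ ∘ P.symm) w ∘L ContinuousLinearMap.inr ℝ _ _ = 0 := by
    intro w hw
    obtain ⟨hwt, hwU, hψw⟩ := hball w hw
    refine fderiv_comp_inr_eq_zero_of_eventually_fst_eq ((hΦd _ hwU).comp w hψw) (π := π) ?_
      ((finrank_range_fderiv_comp_le (hΦd _ hwU) hψw).trans (isMaxOn_iff.1 hmax _ hwU))
    filter_upwards [P.open_target.mem_nhds hwt] with w' hw'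
    rw [Function.comp_apply, ← hPfst, P.right_inv hw']
  have : Nontrivial (fderiv ℝ Φ x₀).ker := Submodule.nontrivial_iff_ne_bot.2 hker
  rw [← ball_prod_same] at hball hkill
  refine P.setOf_exists_ne_apply_eq_mem_nhds hx₀P isOpen_ball
    (by rw [ball_prod_same]; exact ball_mem_nhds _ hε) (fun w hw ↦ (hball w hw).1)
    (fun w hw ↦ (hball w hw).2.1) fun u hu v hv v' hv' ↦ ?_
  have hslice : ∀ ξ ∈ ball (P x₀).2 ε, (u, ξ) ∈ ball (P x₀).1 ε ×ˢ ball (P x₀).2 ε :=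
    fun _ hξ ↦ mk_mem_prod hu hξ
  exact (convex_ball _ _).apply_prodMk_eq_of_fderiv_comp_inr_eq_zero (f := Φ ∘ P.symm)
    (fun ξ hξ ↦ (hΦd _ (hball _ (hslice ξ hξ)).2.1).comp _ (hball _ (hslice ξ hξ)).2.2)
    (fun ξ hξ ↦ hkill _ (hslice ξ hξ)) hv hv'

/-- Let `U ⊆ ℝᵐ` be a nonempty open set, `n < m`, and `Φ : U → ℝⁿ` a `C¹`
map. Then `Φ` is not almost everywhere injective: the set of `x ∈ U` for which some `y ∈ U`
with `y ≠ x` has `Φ y = Φ x` is not a Lebesgue null set. -/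
theorem stmt11 (m n : ℕ) (hnm : n < m)
    (U : Set (Fin m → ℝ)) (hU : IsOpen U) (hne : U.Nonempty)
    (Φ : (Fin m → ℝ) → (Fin n → ℝ)) (hΦ : ContDiffOn ℝ 1 Φ U) :
    volume {x ∈ U | ∃ y ∈ U, y ≠ x ∧ Φ y = Φ x} ≠ 0 := by
  obtain ⟨x₀, hx₀, hmax⟩ :=
    hne.exists_isMaxOn_of_bddAbove (f := fun x ↦ finrank ℝ (fderiv ℝ Φ x).range)
      ⟨n, by rintro _ ⟨x, -, rfl⟩; simpa using Submodule.finrank_le (fderiv ℝ Φ x).range⟩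
  have hker : (fderiv ℝ Φ x₀).ker ≠ ⊥ :=
    LinearMap.ker_ne_bot_of_finrank_lt (by simpa using hnm)
  exact (Measure.measure_pos_of_mem_nhds volume
    (setOf_exists_ne_apply_eq_mem_nhds_of_isMaxOn_finrank hU hΦ hx₀ hmax hker)).ne'
end

section
/- Let q ≥ p ≥ 1. For every nonzero matrix W ∈ ℂ^{p×q}, the linear function P ↦ Tr(P W^T) does not vanish identically on the set of complex row-orthonormal matrices: there exists P ∈ ℂ^{p×q} with P P^T = I_p (transpose, not conjugate transpose) such that Tr(P W^T) ≠ 0. -/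
/-!
The reflection `1 - 2 E_ii` is orthogonal for the transpose, so it maps row-orthonormal
matrices to row-orthonormal matrices, and the traces of `P Wᵀ` before and after the reflection
differ by `2 (P Wᵀ)_ii`. If `W i j ≠ 0`, take for `P` the partial permutation matrix of an
embedding sending `i` to `j`; then `(P Wᵀ)_ii = W i j`, so one of the two traces is nonzero.
-/

open Matrix

namespace Matrix

variable {m n R : Type*} [DecidableEq m] [CommRing R]

theorem mul_mul_transpose_eq_one [Fintype m] [Fintype n] {A : Matrix m m R} {B : Matrix m n R}
    (hA : A * Aᵀ = 1) (hB : B * Bᵀ = 1) : A * B * (A * B)ᵀ = 1 := by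
  rw [transpose_mul, Matrix.mul_assoc, ← Matrix.mul_assoc B, hB, Matrix.one_mul, hA]

theorem reflection_mul_transpose_self [Fintype m] (i : m) :
    (1 - (2 : R) • single i i 1 : Matrix m m R) * (1 - (2 : R) • single i i 1)ᵀ = 1 := by
  simp only [transpose_sub, transpose_one, transpose_smul, transpose_single, sub_mul, mul_sub,
    Matrix.one_mul, smul_mul_smul_comm, single_mul_single_same, mul_one]
  module

theorem trace_sub_trace_reflection_mul [Fintype m] (M : Matrix m m R) (i : m) :
    M.trace - ((1 - (2 : R) • single i i 1) * M).trace = 2 * M i i := by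
  simp [sub_mul, trace_single_mul]

variable [Fintype n] [DecidableEq n]

theorem one_submatrix_mul_transpose_self {τ : m → n} (hτ : Function.Injective τ) :
    (1 : Matrix n n R).submatrix τ id * ((1 : Matrix n n R).submatrix τ id)ᵀ = 1 := by
  rw [transpose_submatrix, transpose_one, ← submatrix_mul _ _ _ _ _ Function.bijective_id,
    Matrix.one_mul, submatrix_one _ hτ]

omit [DecidableEq m] in
theorem one_submatrix_mul_transpose_apply_self (τ : m → n) (W : Matrix m n R) (i : m) :
    ((1 : Matrix n n R).submatrix τ id * Wᵀ) i i = W i (τ i) := by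
  simp [mul_apply, one_apply]

theorem exists_mul_transpose_eq_one_trace_mul_transpose_ne_zero {K : Type*} [Field K]
    [NeZero (2 : K)] [Fintype m] (σ : m ↪ n) {W : Matrix m n K} (hW : W ≠ 0) :
    ∃ P : Matrix m n K, P * Pᵀ = 1 ∧ (P * Wᵀ).trace ≠ 0 := by
  obtain ⟨i, j, hij⟩ : ∃ i j, W i j ≠ 0 := by
    simpa [← Matrix.ext_iff] using hW
  set τ := σ.setValue i j
  set E := (1 : Matrix n n K).submatrix τ id
  set D := (1 - (2 : K) • single i i 1 : Matrix m m K)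
  have hE : E * Eᵀ = 1 := one_submatrix_mul_transpose_self τ.injective
  have hDE : D * E * (D * E)ᵀ = 1 := mul_mul_transpose_eq_one (reflection_mul_transpose_self i) hE
  have hdiff : (E * Wᵀ).trace - (D * E * Wᵀ).trace ≠ 0 := by
    rw [Matrix.mul_assoc, trace_sub_trace_reflection_mul, one_submatrix_mul_transpose_apply_self,
      Function.Embedding.setValue_eq]
    exact mul_ne_zero two_ne_zero hij
  by_cases h : (E * Wᵀ).trace = 0
  · exact ⟨D * E, hDE, by simpa [h] using hdiff⟩
  · exact ⟨E, hE, h⟩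

end Matrix

theorem stmt15_general (p q : ℕ) (hpq : p ≤ q)
    (W : Matrix (Fin p) (Fin q) ℂ) (hW : W ≠ 0) :
    ∃ P : Matrix (Fin p) (Fin q) ℂ, P * Pᵀ = 1 ∧ (P * Wᵀ).trace ≠ 0 :=
  exists_mul_transpose_eq_one_trace_mul_transpose_ne_zero (Fin.castLEEmb hpq) hW

/-- Let `q ≥ p ≥ 1`. For every nonzero `W ∈ ℂ^{p×q}`, the linear function
`P ↦ Tr(P Wᵀ)` does not vanish identically on the set of complex row-orthonormal matrices:
there is `P` with `P Pᵀ = I` (transpose, not conjugate transpose) and `Tr(P Wᵀ) ≠ 0`. -/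
theorem stmt15 (p q : ℕ) (hp : 1 ≤ p) (hpq : p ≤ q)
    (W : Matrix (Fin p) (Fin q) ℂ) (hW : W ≠ 0) :
    ∃ P : Matrix (Fin p) (Fin q) ℂ, P * Pᵀ = 1 ∧ (P * Wᵀ).trace ≠ 0 :=
  stmt15_general p q hpq W hW
end

section
/- Let d ≥ 2 and 1 ≤ s ≤ d − 1. For every nonzero matrix W ∈ ℂ^{d×d}, the linear function P ↦ Tr(P W) does not vanish identically on the set of rank-s idempotents: there exists P ∈ ℂ^{d×d} with P² = P and rank P = s such that Tr(P W) ≠ 0. -/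
/-!
If `Tr(P W) = 0` for every rank-`s` idempotent `P`, test this on the coordinate projections
`D_S = diag(1_S)` with `|S| = s` and on their shears `D_S + t E_{ij}` (`i ∈ S`, `j ∉ S`), which are
again idempotents of rank `s`. The shears give `W j i = 0` off the diagonal; the projections give
that all `s`-element sums of diagonal entries vanish, which for `0 < s < d` forces the diagonal
entries to be equal and then zero. Hence `W = 0`.
-/

open Matrix

section SubsetSums

variable {ι M : Type*} [Fintype ι] [AddCommGroup M] {f : ι → M} {s : ℕ}

theorem eq_of_forall_card_eq_sum_eq_zero (hs0 : 0 < s) (hs : s < Fintype.card ι)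
    (hf : ∀ S : Finset ι, S.card = s → ∑ k ∈ S, f k = 0) (x y : ι) : f x = f y := by
  classical
  obtain rfl | hxy := eq_or_ne x y
  · rfl
  have hcard : s - 1 ≤ ((Finset.univ.erase x).erase y).card := by
    rw [Finset.card_erase_of_mem (Finset.mem_erase.2 ⟨hxy.symm, Finset.mem_univ y⟩),
      Finset.card_erase_of_mem (Finset.mem_univ x), Finset.card_univ]
    omega
  obtain ⟨U, hU, hUcard⟩ := Finset.exists_subset_card_eq hcard
  have hxU : x ∉ U := fun hx => (Finset.mem_erase.1 (Finset.mem_of_mem_erase (hU hx))).1 rfl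
  have hyU : y ∉ U := fun hy => (Finset.mem_erase.1 (hU hy)).1 rfl
  have hx := hf (insert x U) (by rw [Finset.card_insert_of_notMem hxU]; omega)
  have hy := hf (insert y U) (by rw [Finset.card_insert_of_notMem hyU]; omega)
  rw [Finset.sum_insert hxU] at hx
  rw [Finset.sum_insert hyU] at hy
  exact add_right_cancel (hx.trans hy.symm)

theorem eq_zero_of_forall_card_eq_sum_eq_zero [IsAddTorsionFree M] (hs0 : 0 < s)
    (hs : s < Fintype.card ι) (hf : ∀ S : Finset ι, S.card = s → ∑ k ∈ S, f k = 0) :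
    f = 0 := by
  funext x
  obtain ⟨S, -, hS⟩ := Finset.exists_subset_card_eq (s := (Finset.univ : Finset ι)) (n := s)
    (by rw [Finset.card_univ]; omega)
  have hsum : s • f x = 0 := by
    rw [← hf S hS, Finset.sum_congr rfl fun k _ => eq_of_forall_card_eq_sum_eq_zero hs0 hs hf k x,
      Finset.sum_const, hS]
  exact nsmul_right_injective hs0.ne' (hsum.trans (nsmul_zero s).symm)

theorem exists_card_eq_mem_notMem {i j : ι} (hij : i ≠ j) (hs0 : 0 < s)
    (hs : s < Fintype.card ι) : ∃ S : Finset ι, i ∈ S ∧ j ∉ S ∧ S.card = s := by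
  classical
  obtain ⟨S, hiS, hSj, hS⟩ := Finset.exists_subsuperset_card_eq (n := s)
    (Finset.singleton_subset_iff.2 (Finset.mem_erase.2 ⟨hij, Finset.mem_univ i⟩))
    (by rw [Finset.card_singleton]; omega)
    (by rw [Finset.card_erase_of_mem (Finset.mem_univ j), Finset.card_univ]; omega)
  exact ⟨S, Finset.singleton_subset_iff.1 hiS, fun hj => (Finset.mem_erase.1 (hSj hj)).1 rfl, hS⟩

end SubsetSums

section CoordProj

variable {n K : Type*} [Fintype n] [DecidableEq n]

def coordProj [Zero K] [One K] (S : Finset n) : Matrix n n K :=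
  diagonal fun k => if k ∈ S then 1 else 0

variable (S : Finset n) {i j : n}

theorem coordProj_mul_self [Semiring K] :
    (coordProj S : Matrix n n K) * coordProj S = coordProj S := by
  rw [coordProj, diagonal_mul_diagonal]
  congr 1
  funext k
  split_ifs <;> simp

theorem trace_coordProj_mul [Semiring K] (W : Matrix n n K) :
    (coordProj S * W).trace = ∑ k ∈ S, W k k := by
  simp [coordProj, trace, diagonal_mul, Finset.sum_ite_mem]

theorem coordProj_mul_single [Semiring K] (hi : i ∈ S) (t : K) :
    coordProj S * single i j t = single i j t := by
  ext a b
  rw [coordProj, diagonal_mul]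
  by_cases ha : a = i
  · simp [ha, hi]
  · simp [Ne.symm ha]

theorem single_mul_coordProj [Semiring K] (hj : j ∉ S) (t : K) :
    single i j t * coordProj S = 0 := by
  ext a b
  rw [coordProj, mul_diagonal]
  by_cases hb : b = j
  · simp [hb, hj]
  · simp [Ne.symm hb]

theorem rank_coordProj [Field K] : (coordProj S : Matrix n n K).rank = S.card := by
  classical
  rw [coordProj, rank_diagonal, Fintype.card_subtype]
  congr 1
  ext k
  simp

theorem isIdempotentElem_coordProj_add_single [Semiring K] (hi : i ∈ S) (hj : j ∉ S) (t : K) :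
    IsIdempotentElem (coordProj S + single i j t) := by
  have hji : j ≠ i := fun h => hj (h ▸ hi)
  rw [IsIdempotentElem, add_mul, mul_add, mul_add, coordProj_mul_self,
    coordProj_mul_single S hi, single_mul_coordProj S hj, single_mul_single_of_ne _ _ _ _ hji,
    add_zero, add_zero]

theorem rank_coordProj_add_single [Field K] (hi : i ∈ S) (hj : j ∉ S) (t : K) :
    (coordProj S + single i j t).rank = S.card := by
  have hji : j ≠ i := fun h => hj (h ▸ hi)
  have hinv : (1 + single i j t) * (1 - single i j t) = 1 := by
    rw [mul_sub, mul_one, add_mul, one_mul, single_mul_single_of_ne _ _ _ _ hji, add_zero,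
      add_sub_cancel_right]
  rw [← rank_coordProj (K := K) S,
    ← rank_mul_eq_left_of_isUnit_det _ (coordProj S) (isUnit_det_of_right_inverse hinv),
    mul_add, mul_one, coordProj_mul_single S hi]

theorem trace_coordProj_add_single_mul [Semiring K] (t : K) (W : Matrix n n K) :
    ((coordProj S + single i j t) * W).trace = ∑ k ∈ S, W k k + t * W j i := by
  rw [add_mul, trace_add, trace_coordProj_mul, trace_single_mul, smul_eq_mul]

end CoordProj

theorem stmt16_general (d s : ℕ) (hs1 : 1 ≤ s) (hs2 : s ≤ d - 1)
    (W : Matrix (Fin d) (Fin d) ℂ) (hW : W ≠ 0) :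
    ∃ P : Matrix (Fin d) (Fin d) ℂ, P * P = P ∧ P.rank = s ∧ (P * W).trace ≠ 0 := by
  by_contra! h
  have hs : s < Fintype.card (Fin d) := by rw [Fintype.card_fin]; omega
  have hdiag (S : Finset (Fin d)) (hS : S.card = s) : ∑ k ∈ S, W k k = 0 := by
    rw [← trace_coordProj_mul]
    exact h _ (coordProj_mul_self S) (by rw [rank_coordProj, hS])
  have hoff (i j : Fin d) (hij : i ≠ j) : W j i = 0 := by
    obtain ⟨S, hi, hj, hS⟩ := exists_card_eq_mem_notMem hij hs1 hs
    have h1 := h _ (isIdempotentElem_coordProj_add_single S hi hj 1)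
      (by rw [rank_coordProj_add_single S hi hj, hS])
    rwa [trace_coordProj_add_single_mul, hdiag S hS, zero_add, one_mul] at h1
  have hdiag0 := eq_zero_of_forall_card_eq_sum_eq_zero (f := fun k => W k k) hs1 hs hdiag
  refine hW (ext fun a b => ?_)
  obtain rfl | hab := eq_or_ne a b
  · exact congrFun hdiag0 a
  · exact hoff b a hab.symm

/-- Let `d ≥ 2` and `1 ≤ s ≤ d - 1`. For every nonzero `W ∈ ℂ^{d×d}`, the
linear function `P ↦ Tr(P W)` does not vanish identically on the set of rank-`s`
idempotents: there is `P` with `P² = P`, `rank P = s` and `Tr(P W) ≠ 0`. -/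
theorem stmt16 (d s : ℕ) (hd : 2 ≤ d) (hs1 : 1 ≤ s) (hs2 : s ≤ d - 1)
    (W : Matrix (Fin d) (Fin d) ℂ) (hW : W ≠ 0) :
    ∃ P : Matrix (Fin d) (Fin d) ℂ, P * P = P ∧ P.rank = s ∧ (P * W).trace ≠ 0 :=
  stmt16_general d s hs1 hs2 W hW
end
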